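/- arXiv:2509.20108 — 2 statements merged into one kernel-verified Lean document; each statement's English description precedes it below -/
import Mathlib

section
/- Let Δ ⊂ I be a finite set of distinct points in an interval I, h : I → ℝ Lipschitz with constant L, and t ∈ I. Then |h(t) - E[h;Δ](t)| ≤ L · |φ_Δ(t)| · Σ_{t' ∈ Δ} 1/|φ_{Δ∖{t'}}(t')|. -/
open Finset Polynomial Lagrange

/-! The Lagrange basis sums to one, so `h t - E[h;Δ](t) = ∑ⱼ ℓⱼ(t) (h t - h tⱼ)`. Bounding
`|h t - h tⱼ| ≤ L |t - tⱼ|`, each term is controlled by `(t - tⱼ) ℓⱼ(t) = φ_Δ(t) wⱼ`, where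
`wⱼ = 1 / φ_{Δ∖{tⱼ}}(tⱼ)` is the barycentric weight (`Lagrange.nodalWeight`). -/

namespace Lagrange

variable {F ι : Type*} [Field F] [DecidableEq ι] {s : Finset ι} {v : ι → F} {j : ι}

theorem eval_basis (t : F) :
    (Lagrange.basis s v j).eval t = ∏ i ∈ s.erase j, (t - v i) / (v j - v i) := by
  simp only [Lagrange.basis, eval_prod, basisDivisor, eval_mul, eval_C, eval_sub, eval_X]
  exact prod_congr rfl fun _ _ => by rw [div_eq_inv_mul]

theorem sub_mul_eval_basis (hj : j ∈ s) (t : F) :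
    (t - v j) * (Lagrange.basis s v j).eval t = (nodal s v).eval t * nodalWeight s v j := by
  rw [eval_basis, eval_nodal, ← mul_prod_erase s _ hj, nodalWeight, prod_div_distrib,
    div_eq_mul_inv, prod_inv_distrib, mul_assoc]

theorem sub_sum_eval_basis_smul {E : Type*} [AddCommGroup E] [Module F E]
    (hvs : Set.InjOn v s) (hs : s.Nonempty) (f : F → E) (t : F) :
    f t - ∑ j ∈ s, (Lagrange.basis s v j).eval t • f (v j) =
      ∑ j ∈ s, (Lagrange.basis s v j).eval t • (f t - f (v j)) := by
  have hsum : ∑ j ∈ s, (Lagrange.basis s v j).eval t = 1 := by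
    rw [← eval_finsetSum, sum_basis hvs hs, eval_one]
  simp only [smul_sub, sum_sub_distrib, ← sum_smul, hsum, one_smul]

end Lagrange

theorem LipschitzOnWith.norm_sub_sum_eval_basis_smul_le {𝕜 E ι : Type*} [NormedField 𝕜]
    [SeminormedAddCommGroup E] [NormedSpace 𝕜 E] [DecidableEq ι] {s : Finset ι} {v : ι → 𝕜}
    {A : Set 𝕜} {f : 𝕜 → E} {L : NNReal} (hf : LipschitzOnWith L f A) (hvs : Set.InjOn v s)
    (hs : s.Nonempty) (hvA : ∀ i ∈ s, v i ∈ A) {t : 𝕜} (ht : t ∈ A) :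
    ‖f t - ∑ j ∈ s, (Lagrange.basis s v j).eval t • f (v j)‖ ≤
      L * ‖(nodal s v).eval t‖ * ∑ j ∈ s, ‖nodalWeight s v j‖ := by
  rw [sub_sum_eval_basis_smul hvs hs, mul_sum]
  refine (norm_sum_le _ _).trans (sum_le_sum fun j hj => ?_)
  have hlip : ‖f t - f (v j)‖ ≤ L * ‖t - v j‖ := by
    simpa only [dist_eq_norm] using hf.dist_le_mul t ht (v j) (hvA j hj)
  calc ‖(Lagrange.basis s v j).eval t • (f t - f (v j))‖
      ≤ ‖(Lagrange.basis s v j).eval t‖ * (L * ‖t - v j‖) := by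
        rw [norm_smul]; gcongr
    _ = L * ‖(t - v j) * (Lagrange.basis s v j).eval t‖ := by rw [norm_mul]; ring
    _ = L * ‖(nodal s v).eval t‖ * ‖nodalWeight s v j‖ := by
        rw [sub_mul_eval_basis hj, norm_mul, mul_assoc]

theorem stmt_10_general (m : ℕ) (a b : ℝ)
    (nodes : Fin (m + 1) → ℝ) (hinj : Function.Injective nodes)
    (hmem : ∀ j, nodes j ∈ Set.Icc a b)
    (h : ℝ → ℝ) (L : NNReal) (hL : LipschitzOnWith L h (Set.Icc a b))
    (t : ℝ) (ht : t ∈ Set.Icc a b) :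
    |h t - ∑ j, h (nodes j) *
        ∏ i ∈ Finset.univ.erase j, (t - nodes i) / (nodes j - nodes i)|
      ≤ (L : ℝ) * |∏ i, (t - nodes i)| *
        ∑ j, 1 / |∏ i ∈ Finset.univ.erase j, (nodes j - nodes i)| := by
  have hbound := hL.norm_sub_sum_eval_basis_smul_le hinj.injOn univ_nonempty
    (fun j _ => hmem j) ht
  simp only [eval_basis, nodalWeight_eq_eval_nodal_erase_inv, eval_nodal, norm_inv, smul_eq_mul,
    Real.norm_eq_abs] at hbound
  simpa only [one_div, mul_comm (h _)] using hbound

/-- Lipschitz stability estimate for Lagrange extrapolation: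
`|h t - E[h;Δ](t)| ≤ L · |φ_Δ(t)| · Σ_{t'∈Δ} 1/|φ_{Δ∖{t'}}(t')|`. -/
theorem stmt_10 (m : ℕ) (a b : ℝ) (hab : a ≤ b)
    (nodes : Fin (m + 1) → ℝ) (hinj : Function.Injective nodes)
    (hmem : ∀ j, nodes j ∈ Set.Icc a b)
    (h : ℝ → ℝ) (L : NNReal) (hL : LipschitzOnWith L h (Set.Icc a b))
    (t : ℝ) (ht : t ∈ Set.Icc a b) :
    |h t - ∑ j, h (nodes j) *
        ∏ i ∈ Finset.univ.erase j, (t - nodes i) / (nodes j - nodes i)|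
      ≤ (L : ℝ) * |∏ i, (t - nodes i)| *
        ∑ j, 1 / |∏ i ∈ Finset.univ.erase j, (nodes j - nodes i)| :=
  stmt_10_general m a b nodes hinj hmem h L hL t ht
end

section
/- Let t_k = t₀ + kτ (k = 0,…,m, τ > 0), Δ = {t₀,…,t_m}, and let h be Lipschitz with constant L on [t₀, t_m + τ]. Then for all t ∈ [t_m, t_m + τ], |h(t) - E[h;Δ](t)| ≤ 2^m (m+1) τ L. -/
/-!
Because the Lagrange basis functions `ℓ_j` sum to one,
`h t - E[h;Δ](t) = ∑ j, (h t - h t_j) ℓ_j(t)`, and `|t - t_j| |ℓ_j(t)|` equals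
`|φ_Δ(t)| / |φ_{Δ∖{t_j}}(t_j)|`; the Lipschitz bound therefore gives
`|h t - E[h;Δ](t)| ≤ L |φ_Δ(t)| ∑ j, 1 / |φ_{Δ∖{t_j}}(t_j)|`. For equispaced nodes,
`|φ_{Δ∖{t_j}}(t_j)| = τ^m j! (m-j)!`, so the sum is `2^m / (m! τ^m)`, and for `t ∈ [t_m, t_m + τ]`
the estimate `|t - t_i| ≤ (m + 1 - i) τ` gives `|φ_Δ(t)| ≤ (m+1)! τ^(m+1)`.
-/

open Finset
open scoped Nat NNReal

theorem prod_range_natCast_sub_self {R : Type*} [CommRing R] (n : ℕ) :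
    ∏ i ∈ range n, ((n : R) - i) = n ! := by
  rw [prod_range_natCast_sub, ← Nat.descFactorial_eq_prod_range, Nat.descFactorial_self]

theorem prod_range_erase_abs_natCast_sub {m j : ℕ} (hj : j ≤ m) :
    ∏ i ∈ (range (m + 1)).erase j, |(j : ℝ) - i| = j ! * (m - j)! := by
  have hsplit : (range (m + 1)).erase j = range j ∪ Ico (j + 1) (m + 1) := by
    ext i
    simp only [mem_erase, mem_range, mem_union, mem_Ico]
    omega
  have hdisj : Disjoint (range j) (Ico (j + 1) (m + 1)) :=
    disjoint_left.mpr fun i hi hi' => by simp only [mem_range, mem_Ico] at hi hi'; omega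
  rw [hsplit, prod_union hdisj, prod_Ico_eq_prod_range, ← prod_range_natCast_sub_self,
    ← prod_range_add_one_eq_factorial, Nat.cast_prod, show m + 1 - (j + 1) = m - j by omega]
  congr 1
  · refine prod_congr rfl fun i hi => abs_of_nonneg ?_
    exact sub_nonneg.mpr (Nat.cast_le.mpr (mem_range.mp hi).le)
  · refine prod_congr rfl fun k _ => ?_
    push_cast
    rw [abs_of_nonpos (by linarith)]
    ring

theorem Fin.prod_erase_abs_natCast_sub {m : ℕ} (j : Fin (m + 1)) :
    ∏ i ∈ univ.erase j, |((j : ℕ) : ℝ) - (i : ℕ)| = (j : ℕ)! * (m - j)! := by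
  have hval : (univ.erase j).map Fin.valEmbedding = (range (m + 1)).erase j := by
    rw [map_erase, Fin.map_valEmbedding_univ, Nat.Iio_eq_range]
    rfl
  rw [← prod_range_erase_abs_natCast_sub j.is_le, ← hval, prod_map]
  rfl

theorem sum_prod_sub_div_sub_eq_one {F ι : Type*} [Field F] [DecidableEq ι] {s : Finset ι}
    {v : ι → F} (hvs : Set.InjOn v s) (hs : s.Nonempty) (x : F) :
    ∑ j ∈ s, ∏ i ∈ s.erase j, (x - v i) / (v j - v i) = 1 := by
  simpa [Polynomial.eval_finsetSum, Lagrange.basis, Polynomial.eval_prod, Lagrange.basisDivisor,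
    div_eq_inv_mul] using congrArg (Polynomial.eval x) (Lagrange.sum_basis hvs hs)

theorem LipschitzOnWith.abs_sub_sum_lagrange_le {ι : Type*} [DecidableEq ι] {s : Finset ι}
    {v : ι → ℝ} {S : Set ℝ} {f : ℝ → ℝ} {L : ℝ≥0} (hf : LipschitzOnWith L f S)
    (hvs : Set.InjOn v s) (hs : s.Nonempty) (hvS : ∀ j ∈ s, v j ∈ S) {x : ℝ} (hx : x ∈ S) :
    |f x - ∑ j ∈ s, f (v j) * ∏ i ∈ s.erase j, (x - v i) / (v j - v i)|
      ≤ L * (∏ i ∈ s, |x - v i|) * ∑ j ∈ s, 1 / ∏ i ∈ s.erase j, |v j - v i| := by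
  set ℓ := fun j => ∏ i ∈ s.erase j, (x - v i) / (v j - v i)
  have hsum : ∑ j ∈ s, ℓ j = 1 := sum_prod_sub_div_sub_eq_one hvs hs x
  have hsplit : f x - ∑ j ∈ s, f (v j) * ℓ j = ∑ j ∈ s, (f x - f (v j)) * ℓ j := by
    simp only [sub_mul, sum_sub_distrib, ← mul_sum, hsum, mul_one]
  have hℓ (j) (hj : j ∈ s) :
      |x - v j| * |ℓ j| = (∏ i ∈ s, |x - v i|) / ∏ i ∈ s.erase j, |v j - v i| := by
    simp only [ℓ, abs_prod, abs_div, prod_div_distrib, ← mul_div_assoc]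
    rw [mul_prod_erase s (fun i => |x - v i|) hj]
  calc |f x - ∑ j ∈ s, f (v j) * ℓ j| ≤ ∑ j ∈ s, |f x - f (v j)| * |ℓ j| := by
        rw [hsplit]
        exact (abs_sum_le_sum_abs _ _).trans_eq (sum_congr rfl fun j _ => abs_mul _ _)
    _ ≤ ∑ j ∈ s, L * (|x - v j| * |ℓ j|) := by
        refine sum_le_sum fun j hj => ?_
        rw [← mul_assoc]
        gcongr
        simpa only [Real.dist_eq] using hf.dist_le_mul x hx (v j) (hvS j hj)
    _ = L * (∏ i ∈ s, |x - v i|) * ∑ j ∈ s, 1 / ∏ i ∈ s.erase j, |v j - v i| := by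
        rw [mul_sum]
        refine sum_congr rfl fun j hj => ?_
        rw [hℓ j hj]
        ring

theorem prod_erase_abs_sub_equispaced (m : ℕ) (t₀ τ : ℝ) (j : Fin (m + 1)) :
    ∏ i ∈ univ.erase j, |(t₀ + (j : ℕ) * τ) - (t₀ + (i : ℕ) * τ)|
      = |τ| ^ m * ((j : ℕ)! * (m - j)!) := by
  have hcard : #(univ.erase j) = m := by simp
  simp_rw [add_sub_add_left_eq_sub, ← sub_mul, abs_mul, prod_mul_distrib, prod_const, hcard,
    Fin.prod_erase_abs_natCast_sub, mul_comm]

theorem sum_one_div_prod_erase_abs_sub_equispaced (m : ℕ) (t₀ τ : ℝ) :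
    ∑ j : Fin (m + 1), 1 / ∏ i ∈ univ.erase j, |(t₀ + (j : ℕ) * τ) - (t₀ + (i : ℕ) * τ)|
      = 2 ^ m / (m ! * |τ| ^ m) := by
  have hterm (j : ℕ) (hj : j ≤ m) :
      1 / (|τ| ^ m * (j ! * (m - j)! : ℝ)) = m.choose j / (m ! * |τ| ^ m) := by
    rw [Nat.cast_choose ℝ hj]
    field_simp
  simp_rw [prod_erase_abs_sub_equispaced]
  rw [Fin.sum_univ_eq_sum_range (fun j => 1 / (|τ| ^ m * (j ! * (m - j)! : ℝ))),
    sum_congr rfl fun j hj => hterm j (Nat.lt_succ_iff.mp (mem_range.mp hj)), ← sum_div]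
  exact_mod_cast congrArg (fun n : ℕ => (n : ℝ) / (m ! * |τ| ^ m)) (Nat.sum_range_choose m)

theorem prod_abs_sub_equispaced_le {m : ℕ} {t₀ τ t : ℝ} (hτ : 0 ≤ τ)
    (ht : t ∈ Set.Icc (t₀ + m * τ) (t₀ + m * τ + τ)) :
    ∏ i : Fin (m + 1), |t - (t₀ + (i : ℕ) * τ)| ≤ (m + 1)! * τ ^ (m + 1) := by
  have hbound (i : Fin (m + 1)) : |t - (t₀ + (i : ℕ) * τ)| ≤ ((m + 1 : ℕ) - (i : ℕ)) * τ := by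
    have hi : ((i : ℕ) : ℝ) ≤ m := by exact_mod_cast i.is_le
    rw [abs_of_nonneg (by nlinarith [ht.1])]
    push_cast
    linarith [ht.2]
  calc ∏ i : Fin (m + 1), |t - (t₀ + (i : ℕ) * τ)|
      ≤ ∏ i : Fin (m + 1), ((m + 1 : ℕ) - (i : ℕ)) * τ :=
        prod_le_prod (fun i _ => abs_nonneg _) fun i _ => hbound i
    _ = (m + 1)! * τ ^ (m + 1) := by
        rw [prod_mul_distrib, Fin.prod_univ_eq_prod_range (fun i => ((m + 1 : ℕ) : ℝ) - i),
          prod_range_natCast_sub_self, prod_const, card_univ, Fintype.card_fin]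

/-- Equispaced Lipschitz extrapolation estimate:
for `t ∈ [t_m, t_m + τ]`, `|h t - E[h;Δ](t)| ≤ 2^m (m+1) τ L`. -/
theorem stmt_13 (m : ℕ) (t₀ τ : ℝ) (hτ : 0 < τ)
    (h : ℝ → ℝ) (L : NNReal)
    (hL : LipschitzOnWith L h (Set.Icc t₀ (t₀ + m * τ + τ)))
    (t : ℝ) (ht : t ∈ Set.Icc (t₀ + m * τ) (t₀ + m * τ + τ)) :
    |h t - ∑ j : Fin (m + 1), h (t₀ + (j : ℕ) * τ) *
        ∏ i ∈ Finset.univ.erase j,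
          (t - (t₀ + (i : ℕ) * τ)) / ((t₀ + (j : ℕ) * τ) - (t₀ + (i : ℕ) * τ))|
      ≤ 2 ^ m * (m + 1) * τ * (L : ℝ) := by
  have hinj : Function.Injective fun i : Fin (m + 1) => t₀ + (i : ℕ) * τ := fun i j hij =>
    Fin.ext <| by exact_mod_cast mul_right_cancel₀ hτ.ne' (add_left_cancel hij)
  have hnodes (j : Fin (m + 1)) (_ : j ∈ univ) :
      t₀ + (j : ℕ) * τ ∈ Set.Icc t₀ (t₀ + m * τ + τ) := by
    have hj : ((j : ℕ) : ℝ) ≤ m := by exact_mod_cast j.is_le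
    constructor <;> nlinarith
  have ht' : t ∈ Set.Icc t₀ (t₀ + m * τ + τ) := ⟨by nlinarith [ht.1], ht.2⟩
  calc _ ≤ L * (∏ i : Fin (m + 1), |t - (t₀ + (i : ℕ) * τ)|) * (2 ^ m / (m ! * |τ| ^ m)) := by
        rw [← sum_one_div_prod_erase_abs_sub_equispaced m t₀ τ]
        exact hL.abs_sub_sum_lagrange_le hinj.injOn univ_nonempty hnodes ht'
    _ ≤ L * ((m + 1)! * τ ^ (m + 1)) * (2 ^ m / (m ! * τ ^ m)) := by
        rw [abs_of_pos hτ]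
        gcongr
        exact prod_abs_sub_equispaced_le hτ.le ht
    _ = 2 ^ m * (m + 1) * τ * (L : ℝ) := by
        rw [Nat.factorial_succ]
        field_simp
        push_cast
        ring
end
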